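/- arXiv:2104.12082 — 3 statements merged into one kernel-verified Lean document; each statement's English description precedes it below -/
import Mathlib

section
/- Let G be a connected orderenergetic graph of order p and let m ≥ 1. Then the m-shadow graph D_m(G) is connected and orderenergetic, i.e., D_m(G) has mp vertices and ε(D_m(G)) = mp. -/
open Matrix SimpleGraph Finset

variable {V W : Type*}

/-- The adjacency matrix of a simple graph over ℝ is Hermitian. -/
lemma adjMatrix_isHermitian [Fintype V] [DecidableEq V] (G : SimpleGraph V)
    [DecidableRel G.Adj] : (G.adjMatrix ℝ).IsHermitian := by
  rw [Matrix.IsHermitian, Matrix.conjTranspose_eq_transpose_of_trivial]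
  exact G.isSymm_adjMatrix

/-- The energy of a finite simple graph: the sum of the absolute values of the
eigenvalues of its real adjacency matrix. -/
noncomputable def graphEnergy [Fintype V] [DecidableEq V] (G : SimpleGraph V) : ℝ := by
  classical
  exact ∑ i, |(adjMatrix_isHermitian G).eigenvalues i|

/-- The spectrum of a finite simple graph: the multiset of eigenvalues (with
multiplicity) of its real adjacency matrix. -/
noncomputable def graphSpectrum [Fintype V] [DecidableEq V] (G : SimpleGraph V) : Multiset ℝ := by
  classical
  exact Finset.univ.val.map (adjMatrix_isHermitian G).eigenvalues

/-- A graph is integral if every eigenvalue of its adjacency matrix is an integer. -/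
def IsIntegralGraph [Fintype V] [DecidableEq V] (G : SimpleGraph V) : Prop :=
  ∀ x ∈ graphSpectrum G, ∃ k : ℤ, x = (k : ℝ)

/-- The m-shadow graph of `G`, on vertex set `Fin m × V`: `(i,u)` and `(j,v)` are
adjacent iff `u` and `v` are adjacent in `G`. -/
def shadowGraph (m : ℕ) (G : SimpleGraph V) : SimpleGraph (Fin m × V) where
  Adj x y := G.Adj x.2 y.2
  symm := ⟨fun _ _ h => h.symm⟩
  loopless := ⟨fun _ h => G.loopless.irrefl _ h⟩

/-- The duplicate graph of `G`, on vertex set `V ⊕ V`: `inl a` is adjacent to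
`inr b` iff `a` and `b` are adjacent in `G`; no other adjacencies. -/
def duplicateGraph (G : SimpleGraph V) : SimpleGraph (V ⊕ V) where
  Adj x y :=
    match x, y with
    | Sum.inl a, Sum.inr b => G.Adj a b
    | Sum.inr a, Sum.inl b => G.Adj a b
    | _, _ => False
  symm := ⟨by rintro (a | a) (b | b) h <;> first | exact h.symm | exact h.elim⟩
  loopless := ⟨by rintro (a | a) h <;> exact h⟩

/-- The Kronecker (tensor) product of two simple graphs. -/
def tensorGraph (G : SimpleGraph V) (H : SimpleGraph W) : SimpleGraph (V × W) where
  Adj x y := G.Adj x.1 y.1 ∧ H.Adj x.2 y.2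
  symm := ⟨fun _ _ h => ⟨h.1.symm, h.2.symm⟩⟩
  loopless := ⟨fun _ h => G.loopless.irrefl _ h.1⟩

/-- The m-splitting graph of `G`, on vertex set `V ⊕ (Fin m × V)`: original
vertices keep their adjacencies, an original vertex `u` is adjacent to a copy
`(i,v)` iff `u` is adjacent to `v` in `G`, and copies are pairwise non-adjacent. -/
def splittingGraph (m : ℕ) (G : SimpleGraph V) : SimpleGraph (V ⊕ (Fin m × V)) where
  Adj x y :=
    match x, y with
    | Sum.inl u, Sum.inl v => G.Adj u v
    | Sum.inl u, Sum.inr iv => G.Adj u iv.2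
    | Sum.inr iu, Sum.inl v => G.Adj iu.2 v
    | Sum.inr _, Sum.inr _ => False
  symm := ⟨by rintro (u | iu) (v | iv) h <;> first | exact h.symm | exact h.elim⟩
  loopless := ⟨by rintro (u | iu) h <;> first | exact G.loopless.irrefl _ h | exact h⟩

/-- The join of two simple graphs: their disjoint union together with all edges
between the two parts. -/
def joinGraph (G : SimpleGraph V) (H : SimpleGraph W) : SimpleGraph (V ⊕ W) where
  Adj x y :=
    match x, y with
    | Sum.inl a, Sum.inl b => G.Adj a b
    | Sum.inr a, Sum.inr b => H.Adj a b
    | _, _ => True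
  symm := ⟨by rintro (a | a) (b | b) h <;> first | exact h.symm | trivial⟩
  loopless := ⟨by rintro (a | a) h <;> first | exact G.loopless.irrefl _ h | exact H.loopless.irrefl _ h⟩

/-- The superpath graph on a sequence of part sizes: independent sets `W i` of
size `a i`, where vertices in parts `i` and `j` are adjacent iff `|i - j| = 1`. -/
def superpathGraph {t : ℕ} (a : Fin t → ℕ) : SimpleGraph (Σ i : Fin t, Fin (a i)) where
  Adj x y := (x.1 : ℕ) + 1 = (y.1 : ℕ) ∨ (y.1 : ℕ) + 1 = (x.1 : ℕ)
  symm := ⟨fun _ _ h => h.symm⟩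
  loopless := ⟨fun x h => by omega⟩
/-!
The adjacency matrix `J_m ⊗ A` of `D_m(G)` factors as `B * D`, where `B` stacks `m` identity
matrices and `D` puts `m` copies of `A` side by side, and `D * B = m • A`. By Sylvester's
identity `X^p χ(B D) = X^(m p) χ(D B)`, the nonzero eigenvalues of `D_m(G)` are those of `G`
multiplied by `m`, so `ε(D_m(G)) = m ε(G)`. An orderenergetic graph has at least two vertices
(a single vertex has energy `0`), so in the connected graph `G` every vertex `v` has a
neighbour `w`; then `(i, u)` reaches `(i, w)` inside layer `i`, and `(i, w)` is adjacent to
`(j, v)`.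
-/

open Polynomial Kronecker

namespace Matrix

variable {n : Type*} [Fintype n] [DecidableEq n]

lemma IsHermitian.charpoly_smul {A : Matrix n n ℝ} (hA : A.IsHermitian) (c : ℝ) :
    (c • A).charpoly = ∏ i, (X - C (c * hA.eigenvalues i)) := by
  conv_lhs => rw [hA.spectral_theorem, Unitary.conjStarAlgAut_apply, ← smul_mul_assoc,
    ← mul_smul_comm, charpoly_mul_comm, ← mul_assoc]
  simp [← diagonal_smul, charpoly_diagonal]

lemma IsHermitian.roots_charpoly_smul {A : Matrix n n ℝ} (hA : A.IsHermitian) (c : ℝ) :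
    (c • A).charpoly.roots = A.charpoly.roots.map (c * ·) := by
  rw [hA.charpoly_smul, hA.roots_charpoly_eq_eigenvalues, Polynomial.roots_prod _ _
    (Finset.prod_ne_zero_iff.mpr fun i _ => X_sub_C_ne_zero _)]
  simp only [roots_X_sub_C, Multiset.bind_singleton, Multiset.map_map]
  rfl

lemma charpoly_kronecker_allOnes {R : Type*} [CommRing R] (m : ℕ) (A : Matrix n n R) :
    X ^ Fintype.card n * (of (fun _ _ => 1 : Fin m → Fin m → R) ⊗ₖ A).charpoly =
      X ^ (m * Fintype.card n) * ((m : R) • A).charpoly := by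
  let B : Matrix (Fin m × n) n R := of fun x v => (1 : Matrix n n R) x.2 v
  let D : Matrix n (Fin m × n) R := of fun u y => A u y.2
  have hBD : of (fun _ _ => 1 : Fin m → Fin m → R) ⊗ₖ A = B * D := by
    ext ⟨i, u⟩ ⟨j, v⟩
    simp [B, D, mul_apply, one_apply]
  have hDB : D * B = (m : R) • A := by
    ext u v
    simp [B, D, mul_apply, one_apply, Fintype.sum_prod_type]
  rw [hBD, charpoly_mul_comm', hDB, Fintype.card_prod, Fintype.card_fin]

end Matrix

namespace Polynomial

lemma sum_abs_roots_eq_of_X_pow_mul_eq {p q : ℝ[X]} {a b : ℕ} (hp : p ≠ 0) (hq : q ≠ 0)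
    (h : X ^ a * p = X ^ b * q) : (p.roots.map abs).sum = (q.roots.map abs).sum := by
  have := congrArg (fun r : ℝ[X] => (r.roots.map abs).sum) h
  simpa [roots_mul, hp, hq, X_ne_zero, Multiset.map_nsmul, Multiset.sum_nsmul] using this

end Polynomial

namespace SimpleGraph

@[simp]
lemma shadowGraph_adj {m : ℕ} {G : SimpleGraph V} {x y : Fin m × V} :
    (shadowGraph m G).Adj x y ↔ G.Adj x.2 y.2 :=
  Iff.rfl

instance instDecidableRelAdjShadowGraph (m : ℕ) (G : SimpleGraph V) [DecidableRel G.Adj] :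
    DecidableRel (shadowGraph m G).Adj :=
  fun x y => inferInstanceAs (Decidable (G.Adj x.2 y.2))

lemma shadowGraph_adjMatrix {α : Type*} [MulZeroOneClass α] [DecidableEq V] (m : ℕ)
    (G : SimpleGraph V) [DecidableRel G.Adj] :
    (shadowGraph m G).adjMatrix α = of (fun _ _ => 1 : Fin m → Fin m → α) ⊗ₖ G.adjMatrix α := by
  ext ⟨i, u⟩ ⟨j, v⟩
  by_cases h : G.Adj u v <;> simp [h]

theorem Connected.shadowGraph {G : SimpleGraph V} [Nontrivial V] (hG : G.Connected) {m : ℕ}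
    (hm : 0 < m) : (shadowGraph m G).Connected := by
  have : Nonempty (Fin m × V) := ⟨(⟨0, hm⟩, hG.nonempty.some)⟩
  refine ⟨fun ⟨i, u⟩ ⟨j, v⟩ => ?_⟩
  obtain ⟨w, hw⟩ := hG.preconnected.exists_adj_of_nontrivial v
  exact ((hG.preconnected u w).map (⟨fun x => (i, x), id⟩ : G →g _root_.shadowGraph m G)).trans
    (Adj.reachable (shadowGraph_adj.mpr hw.symm))

variable [Fintype V] [DecidableEq V]

lemma graphEnergy_eq_sum_abs_roots (G : SimpleGraph V) [DecidableRel G.Adj] :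
    graphEnergy G = ((G.adjMatrix ℝ).charpoly.roots.map abs).sum := by
  -- `graphEnergy` is built from the `classical` instance; `congr!` identifies it with ours.
  have : graphEnergy G = ∑ i, |(adjMatrix_isHermitian G).eigenvalues i| := by
    unfold graphEnergy
    congr!
  rw [this, (adjMatrix_isHermitian G).roots_charpoly_eq_eigenvalues, Multiset.map_map]
  rfl

lemma graphEnergy_bot : graphEnergy (⊥ : SimpleGraph V) = 0 := by
  simp [graphEnergy_eq_sum_abs_roots, Multiset.map_nsmul, Multiset.sum_nsmul]

lemma graphEnergy_shadowGraph (m : ℕ) (G : SimpleGraph V) :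
    graphEnergy (shadowGraph m G) = m * graphEnergy G := by
  classical
  rw [graphEnergy_eq_sum_abs_roots, graphEnergy_eq_sum_abs_roots, shadowGraph_adjMatrix,
    Polynomial.sum_abs_roots_eq_of_X_pow_mul_eq (charpoly_monic _).ne_zero
      (charpoly_monic _).ne_zero (charpoly_kronecker_allOnes m _),
    (adjMatrix_isHermitian G).roots_charpoly_smul, Multiset.map_map]
  simp [abs_mul, Multiset.sum_map_mul_left]

lemma nontrivial_of_graphEnergy_eq_card [Nonempty V] {G : SimpleGraph V}
    (hG : graphEnergy G = Fintype.card V) : Nontrivial V := by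
  by_contra h
  have : Subsingleton V := not_nontrivial_iff_subsingleton.mp h
  rw [Subsingleton.elim G ⊥, graphEnergy_bot, eq_comm, Nat.cast_eq_zero] at hG
  exact Fintype.card_ne_zero hG

end SimpleGraph

/-- If `G` is a connected orderenergetic graph of order `p` and `m ≥ 1`, then the
m-shadow graph `D_m(G)` is connected and orderenergetic: it has `m * p` vertices
and energy `m * p`. -/
theorem shadowGraph_connected_orderenergetic [Fintype V] [DecidableEq V]
    (G : SimpleGraph V) (p m : ℕ) (hp : Fintype.card V = p)
    (hconn : G.Connected) (hord : graphEnergy G = p) (hm : 1 ≤ m) :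
    (shadowGraph m G).Connected ∧ Fintype.card (Fin m × V) = m * p ∧
      graphEnergy (shadowGraph m G) = (m * p : ℕ) := by
  have := hconn.nonempty
  have := nontrivial_of_graphEnergy_eq_card (hp ▸ hord)
  refine ⟨hconn.shadowGraph hm, by simp [hp], ?_⟩
  rw [graphEnergy_shadowGraph, hord, Nat.cast_mul]
end

section
/- Let G be an orderenergetic graph of order p. Then the 2-splitting graph spl₂(G) is orderenergetic, i.e., spl₂(G) has 3p vertices and ε(spl₂(G)) = 3p. -/
open Matrix SimpleGraph Finset

variable {V W : Type*}

/-! The adjacency matrix of `spl_m(G)` is the Kronecker product `B ⊗ A` of the adjacency matrix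
`A` of `G` with the `(m+1) × (m+1)` matrix `B` having ones in its first row and column and zeros
elsewhere. Diagonalising both factors orthogonally shows that the eigenvalues of `B ⊗ A` are the
products of those of `B` and `A`, so `ε(spl_m G) = ε(B) ε(G)`. For `m = 2` the characteristic
polynomial of `B` is `X (X - 2) (X + 1)`, so `ε(B) = 3`. -/

open Polynomial
open scoped Kronecker

namespace Matrix.IsHermitian

lemma kronecker {m n : Type*} {A : Matrix m m ℝ} {B : Matrix n n ℝ} (hA : A.IsHermitian)
    (hB : B.IsHermitian) : (A ⊗ₖ B).IsHermitian := by
  rw [IsHermitian, conjTranspose_kronecker, hA.eq, hB.eq]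

variable {m n ι : Type*} [Fintype m] [Fintype n] [Fintype ι] [DecidableEq m] [DecidableEq n]

lemma eigenvalues_map_eq_of_charpoly_eq {A : Matrix n n ℝ} (hA : A.IsHermitian) {f : ι → ℝ}
    (h : A.charpoly = ∏ i, (X - C (f i))) :
    univ.val.map hA.eigenvalues = univ.val.map f := by
  have hroots := hA.roots_charpoly_eq_eigenvalues
  have hprod : ∏ i, (X - C (f i)) = ((univ.val.map f).map fun a => X - C a).prod := by
    rw [Multiset.map_map]; rfl
  rw [h, hprod, roots_multiset_prod_X_sub_C] at hroots
  simpa using hroots.symm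

lemma sum_abs_eigenvalues_eq_of_charpoly_eq {A : Matrix n n ℝ} (hA : A.IsHermitian) {f : ι → ℝ}
    (h : A.charpoly = ∏ i, (X - C (f i))) :
    ∑ i, |hA.eigenvalues i| = ∑ i, |f i| := by
  have := congr_arg (fun s => (s.map abs).sum) (hA.eigenvalues_map_eq_of_charpoly_eq h)
  simpa only [Multiset.map_map, Finset.sum_eq_multiset_sum, Function.comp_def] using this

lemma charpoly_kronecker {A : Matrix m m ℝ} {B : Matrix n n ℝ} (hA : A.IsHermitian)
    (hB : B.IsHermitian) :
    (A ⊗ₖ B).charpoly = ∏ ij : m × n, (X - C (hA.eigenvalues ij.1 * hB.eigenvalues ij.2)) := by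
  set U : Matrix m m ℝ := ↑hA.eigenvectorUnitary
  set W : Matrix n n ℝ := ↑hB.eigenvectorUnitary
  have hU : star U * U = 1 := Unitary.coe_star_mul_self hA.eigenvectorUnitary
  have hW : star W * W = 1 := Unitary.coe_star_mul_self hB.eigenvectorUnitary
  have hdiag : A ⊗ₖ B = (U ⊗ₖ W) * (diagonal hA.eigenvalues ⊗ₖ diagonal hB.eigenvalues) *
      (star U ⊗ₖ star W) := by
    conv_lhs => rw [hA.spectral_theorem, hB.spectral_theorem]
    simp [Unitary.conjStarAlgAut_apply, mul_kronecker_mul, U, W]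
  rw [hdiag, charpoly_mul_comm, ← mul_assoc, ← mul_kronecker_mul, hU, hW, one_kronecker_one,
    one_mul, diagonal_kronecker_diagonal, charpoly_diagonal]

lemma sum_abs_eigenvalues_kronecker {A : Matrix m m ℝ} {B : Matrix n n ℝ} (hA : A.IsHermitian)
    (hB : B.IsHermitian) :
    ∑ ij, |(hA.kronecker hB).eigenvalues ij| =
      (∑ i, |hA.eigenvalues i|) * ∑ j, |hB.eigenvalues j| := by
  rw [sum_abs_eigenvalues_eq_of_charpoly_eq _ (hA.charpoly_kronecker hB), Finset.sum_mul_sum,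
    Fintype.sum_prod_type]
  simp only [abs_mul]

end Matrix.IsHermitian

def splittingPattern (m : ℕ) : Matrix (Option (Fin m)) (Option (Fin m)) ℝ :=
  of fun i j => if i = none ∨ j = none then 1 else 0

lemma isHermitian_splittingPattern (m : ℕ) : (splittingPattern m).IsHermitian := by
  ext i j
  simp [splittingPattern, or_comm]

lemma adjMatrix_splittingGraph {V : Type*} [DecidableEq V] (m : ℕ) (G : SimpleGraph V)
    [DecidableRel G.Adj] [DecidableRel (splittingGraph m G).Adj] :
    (splittingGraph m G).adjMatrix ℝ =
      reindex optionProdEquiv optionProdEquiv (splittingPattern m ⊗ₖ G.adjMatrix ℝ) := by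
  -- `congr` reconciles the `Decidable` instances of the two sides' `if`s.
  ext (u | ⟨i, u⟩) (v | ⟨j, v⟩) <;>
    simp only [adjMatrix_apply] <;> simp [splittingPattern, splittingGraph] <;> congr

lemma graphEnergy_splittingGraph {V : Type*} [Fintype V] [DecidableEq V] (m : ℕ)
    (G : SimpleGraph V) :
    graphEnergy (splittingGraph m G) =
      (∑ i, |(isHermitian_splittingPattern m).eigenvalues i|) * graphEnergy G := by
  classical
  have hK := (isHermitian_splittingPattern m).kronecker (adjMatrix_isHermitian G)
  have hchar : ((splittingGraph m G).adjMatrix ℝ).charpoly = ∏ k, (X - C (hK.eigenvalues k)) := by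
    rw [adjMatrix_splittingGraph, charpoly_reindex, hK.charpoly_eq]
    rfl
  unfold graphEnergy
  rw [Matrix.IsHermitian.sum_abs_eigenvalues_eq_of_charpoly_eq _ hchar,
    Matrix.IsHermitian.sum_abs_eigenvalues_kronecker]

lemma charpoly_splittingPattern_two :
    (splittingPattern 2).charpoly = ∏ i, (X - C (![2, -1, 0] i)) := by
  rw [← charpoly_reindex (finSuccEquiv 2).symm, charpoly, det_fin_three]
  simp [splittingPattern, Fin.prod_univ_three, C_ofNat]
  ring

lemma sum_abs_eigenvalues_splittingPattern_two :
    ∑ i, |(isHermitian_splittingPattern 2).eigenvalues i| = 3 := by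
  rw [Matrix.IsHermitian.sum_abs_eigenvalues_eq_of_charpoly_eq _ charpoly_splittingPattern_two]
  norm_num [Fin.sum_univ_three, Matrix.cons_val_two]

/-- If `G` is an orderenergetic graph of order `p`, then the 2-splitting graph
`spl₂(G)` is orderenergetic: it has `3 * p` vertices and energy `3 * p`. -/
theorem splittingGraph_two_orderenergetic [Fintype V] [DecidableEq V]
    (G : SimpleGraph V) (p : ℕ) (hp : Fintype.card V = p)
    (hord : graphEnergy G = p) :
    Fintype.card (V ⊕ (Fin 2 × V)) = 3 * p ∧
      graphEnergy (splittingGraph 2 G) = (3 * p : ℕ) := by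
  refine ⟨by simp only [Fintype.card_sum, Fintype.card_prod, Fintype.card_fin, hp]; ring, ?_⟩
  rw [graphEnergy_splittingGraph, sum_abs_eigenvalues_splittingPattern_two, hord]
  push_cast
  ring
end

section
/- For every p ≥ 1, the Kronecker product K_{p,p} × K_{1,3} of the complete bipartite graph K_{p,p} with the star K_{1,3} has energy 4√3·p, and since 4√3·p < 8p it is hypoenergetic. -/
/-!
The adjacency matrix `A` of `K_{a,b}` satisfies `A³ = ab • A`, so the adjacency matrix of the
Kronecker product `K_{a,b} × K_{c,d}` satisfies `A³ = N • A` with `N = abcd`. Hence every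
eigenvalue `λ` lies in `{0, ±√N}`, so `√N |λ| = λ²` and the energy is `tr (A²) / √N`. Since
`tr (A²) = 2ab · 2cd = 4N`, the energy is `4√N`, which is `4√3 p` for `K_{p,p} × K_{1,3}`.
-/

open Matrix SimpleGraph Finset

variable {V W : Type*}

lemma mul_abs_eq_sq_of_pow_three_eq {x c : ℝ} (hc : 0 ≤ c) (h : x ^ 3 = c ^ 2 * x) :
    c * |x| = x ^ 2 := by
  have hroots : x * ((x - c) * (x + c)) = 0 := by linear_combination h
  rcases mul_eq_zero.mp hroots with rfl | hroots
  · simp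
  rcases mul_eq_zero.mp hroots with hx | hx
  · rw [sub_eq_zero.mp hx, abs_of_nonneg hc, sq]
  · rw [eq_neg_of_add_eq_zero_left hx, abs_neg, abs_of_nonneg hc, neg_sq, sq]

namespace Matrix.IsHermitian

variable {n : Type*} [Fintype n] [DecidableEq n] {A : Matrix n n ℝ}

lemma trace_mul_self_eq_sum_eigenvalues_sq (hA : A.IsHermitian) :
    (A * A).trace = ∑ i, hA.eigenvalues i ^ 2 := by
  conv_lhs => rw [hA.spectral_theorem, ← map_mul, Unitary.conjStarAlgAut_apply, trace_mul_cycle,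
    Unitary.coe_star_mul_self, one_mul, diagonal_mul_diagonal, trace_diagonal]
  simp [sq]

lemma eigenvalues_pow_three_eq (hA : A.IsHermitian) {c : ℝ} (h : A * (A * A) = c • A) (i : n) :
    hA.eigenvalues i ^ 3 = c * hA.eigenvalues i := by
  set D : Matrix n n ℝ := diagonal (RCLike.ofReal ∘ hA.eigenvalues)
  have hD : D * (D * D) = c • D := by
    apply EquivLike.injective (Unitary.conjStarAlgAut ℝ (Matrix n n ℝ) hA.eigenvectorUnitary)
    rw [map_mul, map_mul, map_smul, ← hA.spectral_theorem, h]
  simpa [D, diagonal_mul_diagonal, pow_succ, mul_assoc] using congrFun (congrFun hD i) i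

lemma mul_sum_abs_eigenvalues_eq_trace (hA : A.IsHermitian) {c : ℝ} (hc : 0 ≤ c)
    (h : A * (A * A) = c ^ 2 • A) :
    c * ∑ i, |hA.eigenvalues i| = (A * A).trace := by
  rw [hA.trace_mul_self_eq_sum_eigenvalues_sq, Finset.mul_sum]
  exact Finset.sum_congr rfl fun i _ =>
    mul_abs_eq_sq_of_pow_three_eq hc (hA.eigenvalues_pow_three_eq h i)

end Matrix.IsHermitian

section Graph

open scoped Kronecker

lemma graphEnergy_eq_trace_div_of_adjMatrix_cube [Fintype V] [DecidableEq V] (G : SimpleGraph V)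
    [DecidableRel G.Adj] {c : ℝ} (hc : 0 < c)
    (h : G.adjMatrix ℝ * (G.adjMatrix ℝ * G.adjMatrix ℝ) = c ^ 2 • G.adjMatrix ℝ) :
    graphEnergy G = (G.adjMatrix ℝ * G.adjMatrix ℝ).trace / c := by
  -- `graphEnergy` is computed with the classical decidability instance.
  obtain rfl : ‹DecidableRel G.Adj› = fun _ _ => Classical.propDecidable _ := Subsingleton.elim _ _
  classical
  have hsum := (adjMatrix_isHermitian G).mul_sum_abs_eigenvalues_eq_trace hc.le h
  rw [eq_div_iff hc.ne', mul_comm, ← hsum]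
  rfl

lemma adjMatrix_tensorGraph (G : SimpleGraph V) (H : SimpleGraph W) [DecidableRel G.Adj]
    [DecidableRel H.Adj] [DecidableRel (tensorGraph G H).Adj] :
    (tensorGraph G H).adjMatrix ℝ = G.adjMatrix ℝ ⊗ₖ H.adjMatrix ℝ := by
  ext ⟨a, b⟩ ⟨c, d⟩
  simp only [adjMatrix_apply, kroneckerMap_apply]
  by_cases hG : G.Adj a c <;> by_cases hH : H.Adj b d <;> simp [tensorGraph, hG, hH]

variable [Fintype V] [Fintype W] [DecidableRel (completeBipartiteGraph V W).Adj]

lemma adjMatrix_completeBipartiteGraph_cube :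
    (completeBipartiteGraph V W).adjMatrix ℝ * ((completeBipartiteGraph V W).adjMatrix ℝ *
      (completeBipartiteGraph V W).adjMatrix ℝ) =
      ((Fintype.card V * Fintype.card W : ℕ) : ℝ) • (completeBipartiteGraph V W).adjMatrix ℝ := by
  ext (i | i) (j | j) <;>
    simp [mul_apply, Fintype.sum_sum_type, adjMatrix_apply, mul_comm]

lemma trace_adjMatrix_completeBipartiteGraph_mul_self :
    ((completeBipartiteGraph V W).adjMatrix ℝ * (completeBipartiteGraph V W).adjMatrix ℝ).trace =
      2 * (Fintype.card V * Fintype.card W : ℕ) := by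
  simp [trace, mul_apply, Fintype.sum_sum_type, adjMatrix_apply]
  ring

end Graph

lemma graphEnergy_tensorGraph_completeBipartiteGraph {V₁ W₁ V₂ W₂ : Type*}
    [Fintype V₁] [Fintype W₁] [Fintype V₂] [Fintype W₂]
    [DecidableEq V₁] [DecidableEq W₁] [DecidableEq V₂] [DecidableEq W₂]
    [Nonempty V₁] [Nonempty W₁] [Nonempty V₂] [Nonempty W₂] :
    graphEnergy (tensorGraph (completeBipartiteGraph V₁ W₁) (completeBipartiteGraph V₂ W₂)) =
      4 * √((Fintype.card V₁ * Fintype.card W₁ * (Fintype.card V₂ * Fintype.card W₂) : ℕ) : ℝ) := by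
  classical
  have hN : (0 : ℝ) <
      (Fintype.card V₁ * Fintype.card W₁ * (Fintype.card V₂ * Fintype.card W₂) : ℕ) := by
    positivity
  rw [graphEnergy_eq_trace_div_of_adjMatrix_cube _ (Real.sqrt_pos.2 hN), adjMatrix_tensorGraph,
    ← mul_kronecker_mul, trace_kronecker, trace_adjMatrix_completeBipartiteGraph_mul_self,
    trace_adjMatrix_completeBipartiteGraph_mul_self, mul_mul_mul_comm, ← Nat.cast_mul,
    mul_div_assoc, Real.div_sqrt]
  · norm_num
  · rw [adjMatrix_tensorGraph, ← mul_kronecker_mul, ← mul_kronecker_mul,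
      adjMatrix_completeBipartiteGraph_cube, adjMatrix_completeBipartiteGraph_cube,
      smul_kronecker, kronecker_smul, smul_smul, ← Nat.cast_mul, Real.sq_sqrt hN.le]

/-- For every `p ≥ 1`, the Kronecker product `K_{p,p} × K_{1,3}` (which has `8p`
vertices) has energy `4√3 · p`, and since `4√3 · p < 8p` it is hypoenergetic. -/
theorem tensor_completeBipartite_star_hypoenergetic (p : ℕ) (hp : 1 ≤ p) :
    Fintype.card ((Fin p ⊕ Fin p) × (Fin 1 ⊕ Fin 3)) = 8 * p ∧
      graphEnergy (tensorGraph (completeBipartiteGraph (Fin p) (Fin p))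
        (completeBipartiteGraph (Fin 1) (Fin 3))) = 4 * Real.sqrt 3 * p ∧
      4 * Real.sqrt 3 * (p : ℝ) < 8 * p := by
  have : NeZero p := ⟨by omega⟩
  have hp' : (0 : ℝ) < p := by exact_mod_cast hp
  refine ⟨by simp only [Fintype.card_prod, Fintype.card_sum, Fintype.card_fin]; ring, ?_, ?_⟩
  · rw [graphEnergy_tensorGraph_completeBipartiteGraph]
    simp only [Fintype.card_fin]
    push_cast
    rw [show (p * p * 3 : ℝ) = 3 * p ^ 2 by ring, Real.sqrt_mul (by norm_num),
      Real.sqrt_sq hp'.le, mul_assoc]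
  · have hsqrt3 : Real.sqrt 3 < 2 := by
      rw [Real.sqrt_lt' two_pos]
      norm_num
    nlinarith
end
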